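/- Let k ≥ 4, let M be a simple matroid of rank k+1, and let (X₂,…,X_k) be an optimal k-stratification of M. Let i ∈ {3,…,k−1}. If X_i is a rank-i flat of M and |X_{i−1}| < |X_i|/k, then (X_i, X_{i+1}, …, X_k) is an optimal partial (k−1)-stratification of the 1-fold principal truncation N of X_i in M; in particular, for each ℓ ∈ {i,…,k}, X_ℓ is (ℓ−1)-degenerate in N and is a largest (ℓ−1)-degenerate subset of X_{ℓ+1} in N (where X_{k+1} = E(M)). -/

import Mathlib

open Set
open scoped Classical

namespace MatroidPaper

variable {α : Type*}

/-- The rank of a set in a matroid: the supremum of cardinalities of independent subsets. -/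
noncomputable def rkS (M : Matroid α) (X : Set α) : ℕ :=
  sSup {n | ∃ I, M.Indep I ∧ I ⊆ X ∧ I.ncard = n}

/-- The rank of a matroid. -/
noncomputable def rk (M : Matroid α) : ℕ := rkS M M.E

/-- A hyperplane: a flat of rank `rk M - 1`. -/
def Hyp (M : Matroid α) (H : Set α) : Prop := M.IsFlat H ∧ rkS M H = rk M - 1

/-- Two sets are skew if the rank of their union is the sum of their ranks. -/
def SkewSets (M : Matroid α) (X Y : Set α) : Prop :=
  rkS M (X ∪ Y) = rkS M X + rkS M Y

/-- A simple matroid: every subset of the ground set with at most two elements is independent. -/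
def SimpleM (M : Matroid α) : Prop := ∀ X ⊆ M.E, X.ncard ≤ 2 → M.Indep X

/-- A real-representable matroid. -/
def RealRep (M : Matroid α) : Prop :=
  ∃ (n : ℕ) (φ : α → (Fin n → ℝ)), ∀ I, I ⊆ M.E →
    (M.Indep I ↔ LinearIndependent ℝ (fun x : I => φ x))

/-- A matroid is `k`-degenerate if it has rank at most one or its ground set is covered by
flats of rank at least two with `∑ (r(Fᵢ) - 1) ≤ k - 1`. -/
def Degen (M : Matroid α) (k : ℕ) : Prop :=
  rk M ≤ 1 ∨ ∃ (t : ℕ) (F : Fin t → Set α),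
    (∀ i, M.IsFlat (F i) ∧ 2 ≤ rkS M (F i)) ∧
    M.E ⊆ ⋃ i, F i ∧ ∑ i, (rkS M (F i) - 1) ≤ k - 1

/-- A set `X` is `k`-degenerate in `M` if the restriction `M|X` is a `k`-degenerate matroid. -/
def DegenSet (M : Matroid α) (X : Set α) (k : ℕ) : Prop := Degen (M.restrict X) k

/-- `N` is the (one-fold) principal truncation of `F` in `M`. -/
noncomputable def IsPT (M : Matroid α) (F : Set α) (N : Matroid α) : Prop :=
  N.E = M.E ∧ ∀ X ⊆ M.E,
    rkS N X = if F ⊆ M.closure X then rkS M X - 1 else rkS M X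

/-- `N` is the complete principal truncation `M ÷ F` of `F` in `M`. -/
def IsCPT (M : Matroid α) (F : Set α) (N : Matroid α) : Prop :=
  N.E = M.E ∧ ∀ X ⊆ M.E,
    rkS N X = min (rkS M X + (rkS M F - 1)) (rkS M (X ∪ F)) - (rkS M F - 1)

/-!
A cover of `X_l` witnessing `l`-degeneracy in `M` has at most `k` members, and one of them
spans `X_i`: otherwise each member meets `X_i` in a set of rank below `i`, which is
`(i-1)`-degenerate and hence, by optimality, of size at most `|X_{i-1}|`, too few to cover `X_i`.
The rank of that member drops by one in `N`, so the same cover shows that `X_l` is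
`(l-1)`-degenerate in `N`.

Conversely, in a cover witnessing `(l-1)`-degeneracy of `Y` in `N`, the members spanning `X_i`
all contain the rank-`i` flat `X_i` in their closures; by submodularity their union has `M`-rank
at most two more than the sum of their `N`-ranks minus one. Replacing them by their union gives
an `l`-degeneracy cover of `Y` in `M`, and optimality of `X_l` bounds `|Y|`.
-/

section Rank

variable {M : Matroid α} {A B F X Y Z : Set α}

lemma cast_rkS [M.RankFinite] (X : Set α) : (rkS M X : ℕ∞) = M.eRk X := by
  obtain ⟨I, hI⟩ := M.exists_isBasis' X
  have hmem : I.ncard ∈ {n | ∃ J, M.Indep J ∧ J ⊆ X ∧ J.ncard = n} :=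
    ⟨I, hI.indep, hI.subset, rfl⟩
  have hmax : ∀ n ∈ {n | ∃ J, M.Indep J ∧ J ⊆ X ∧ J.ncard = n}, n ≤ I.ncard := by
    rintro _ ⟨J, hJ, hJX, rfl⟩
    have hle := hJ.encard_le_eRk_of_subset hJX
    rwa [← hI.encard_eq_eRk, ← hJ.finite.cast_ncard_eq, ← hI.indep.finite.cast_ncard_eq,
      Nat.cast_le] at hle
  rw [rkS, IsGreatest.csSup_eq ⟨hmem, hmax⟩, hI.indep.finite.cast_ncard_eq, hI.encard_eq_eRk]

variable [M.RankFinite]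

lemma rkS_le_rkS (h : X ⊆ Y) : rkS M X ≤ rkS M Y := by
  have hle := M.eRk_mono h
  rwa [← cast_rkS, ← cast_rkS, Nat.cast_le] at hle

@[simp] lemma rkS_empty : rkS M ∅ = 0 :=
  ENat.natCast_inj.1 (by rw [cast_rkS, Matroid.eRk_empty, Nat.cast_zero])

lemma rkS_closure (X : Set α) : rkS M (M.closure X) = rkS M X :=
  ENat.natCast_inj.1 (by rw [cast_rkS, cast_rkS, Matroid.eRk_closure_eq])

lemma rkS_closure_union_closure (A B : Set α) :
    rkS M (M.closure A ∪ M.closure B) = rkS M (A ∪ B) :=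
  ENat.natCast_inj.1 (by
    rw [cast_rkS, cast_rkS, Matroid.eRk_union_closure_left_eq,
      Matroid.eRk_union_closure_right_eq])

lemma rkS_restrict (h : Z ⊆ Y) : rkS (M.restrict Y) Z = rkS M Z :=
  ENat.natCast_inj.1 (by rw [cast_rkS, cast_rkS, Matroid.restrict_eRk_eq _ h])

lemma rk_restrict (Y : Set α) : rk (M.restrict Y) = rkS M Y :=
  rkS_restrict subset_rfl

lemma rkS_inter_add_rkS_union_le (A B : Set α) :
    rkS M (A ∩ B) + rkS M (A ∪ B) ≤ rkS M A + rkS M B := by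
  have hle := M.eRk_inter_add_eRk_union_le A B
  rwa [← cast_rkS, ← cast_rkS, ← cast_rkS, ← cast_rkS, ← Nat.cast_add, ← Nat.cast_add,
    Nat.cast_le] at hle

lemma rkS_le_of_subset_closure (h : F ⊆ M.closure Z) : rkS M F ≤ rkS M Z :=
  (rkS_le_rkS h).trans (rkS_closure Z).le

lemma subset_closure_of_rkS_le (hZX : Z ⊆ X) (hX : X ⊆ M.E) (h : rkS M X ≤ rkS M Z) :
    X ⊆ M.closure Z := by
  have hle : M.eRk X ≤ M.eRk Z := by rw [← cast_rkS, ← cast_rkS]; exact_mod_cast h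
  rw [(M.isRkFinite_set Z).closure_eq_closure_of_subset_of_eRk_ge_eRk hZX hle]
  exact M.subset_closure X hX

lemma rkS_union_add_rkS_le (hA : F ⊆ M.closure A) (hB : F ⊆ M.closure B) :
    rkS M (A ∪ B) + rkS M F ≤ rkS M A + rkS M B := by
  have hsub := rkS_inter_add_rkS_union_le (M := M) (M.closure A) (M.closure B)
  rw [rkS_closure, rkS_closure, rkS_closure_union_closure] at hsub
  have hF := rkS_le_rkS (M := M) (subset_inter hA hB)
  omega

lemma rkS_biUnion_add_card_mul_le (𝒮 : Finset (Set α)) (h : ∀ G ∈ 𝒮, F ⊆ M.closure G) :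
    rkS M (⋃ G ∈ 𝒮, G) + 𝒮.card * rkS M F ≤ ∑ G ∈ 𝒮, rkS M G + rkS M F := by
  induction 𝒮 using Finset.induction_on with
  | empty => simp
  | insert A 𝒮 hA ih =>
    rw [Finset.set_biUnion_insert, Finset.sum_insert hA, Finset.card_insert_of_notMem hA,
      add_one_mul]
    have ih := ih fun G hG => h G (Finset.mem_insert_of_mem hG)
    rcases 𝒮.eq_empty_or_nonempty with rfl | ⟨G, hG⟩
    · simp
    have hU : F ⊆ M.closure (⋃ G ∈ 𝒮, G) :=
      (h G (Finset.mem_insert_of_mem hG)).trans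
        (M.closure_subset_closure (subset_biUnion_of_mem (u := id) hG))
    have hmerge := rkS_union_add_rkS_le (h A (Finset.mem_insert_self A 𝒮)) hU
    omega

lemma rkS_biUnion_le (𝒮 : Finset (Set α)) (hF : 2 ≤ rkS M F)
    (h : ∀ G ∈ 𝒮, F ⊆ M.closure G) :
    rkS M (⋃ G ∈ 𝒮, G) ≤ ∑ G ∈ 𝒮, (rkS M G - 2) + 2 := by
  rcases 𝒮.eq_empty_or_nonempty with rfl | h𝒮
  · simp
  have hsum : ∑ G ∈ 𝒮, (rkS M G - 2) + 2 * 𝒮.card = ∑ G ∈ 𝒮, rkS M G := by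
    rw [mul_comm, ← smul_eq_mul, ← Finset.sum_const, ← Finset.sum_add_distrib]
    exact Finset.sum_congr rfl fun G hG =>
      Nat.sub_add_cancel (hF.trans (rkS_le_of_subset_closure (h G hG)))
  have hmerge := rkS_biUnion_add_card_mul_le 𝒮 h
  obtain ⟨c, hc⟩ : ∃ c, 𝒮.card = c + 1 := ⟨_, (Nat.succ_pred_eq_of_pos h𝒮.card_pos).symm⟩
  obtain ⟨f, hf⟩ : ∃ f, rkS M F = f + 2 := ⟨_, (Nat.sub_add_cancel hF).symm⟩
  rw [hc, hf] at hmerge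
  rw [hc] at hsum
  nlinarith

end Rank

section Degeneracy

variable {M : Matroid α} {Y : Set α} {d : ℕ}

/-- The witnesses of `Degen` with arbitrary sets in place of flats; closing them in
`M.restrict Y` recovers flats. -/
structure IsDegenCover (M : Matroid α) (Y : Set α) (d : ℕ) (𝒢 : Finset (Set α)) : Prop where
  subset : ∀ G ∈ 𝒢, G ⊆ Y
  two_le_rkS : ∀ G ∈ 𝒢, 2 ≤ rkS M G
  subset_biUnion : Y ⊆ ⋃ G ∈ 𝒢, G
  sum_le : ∑ G ∈ 𝒢, (rkS M G - 1) ≤ d - 1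

lemma IsDegenCover.card_le {𝒢 : Finset (Set α)} (h : IsDegenCover M Y d 𝒢) :
    𝒢.card ≤ d - 1 :=
  calc 𝒢.card = ∑ _G ∈ 𝒢, 1 := Finset.card_eq_sum_ones 𝒢
    _ ≤ ∑ G ∈ 𝒢, (rkS M G - 1) :=
      Finset.sum_le_sum fun G hG => by have := h.two_le_rkS G hG; omega
    _ ≤ d - 1 := h.sum_le

lemma IsDegenCover.mono {d' : ℕ} {𝒢 : Finset (Set α)} (h : IsDegenCover M Y d 𝒢)
    (hd : d ≤ d') : IsDegenCover M Y d' 𝒢 :=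
  ⟨h.subset, h.two_le_rkS, h.subset_biUnion, h.sum_le.trans (by omega)⟩

variable [M.RankFinite]

lemma degenSet_iff : DegenSet M Y d ↔ rkS M Y ≤ 1 ∨ ∃ 𝒢, IsDegenCover M Y d 𝒢 := by
  rw [DegenSet, Degen, rk_restrict]
  refine or_congr_right ⟨?_, ?_⟩
  · rintro ⟨t, F, hF, hcov, hsum⟩
    have hFY : ∀ j, F j ⊆ Y := fun j => (hF j).1.subset_ground
    refine ⟨Finset.univ.image F, ⟨?_, ?_, ?_, ?_⟩⟩
    · simpa using hFY
    · simpa [← rkS_restrict (hFY _)] using fun j => (hF j).2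
    · simpa using hcov
    · refine (Finset.sum_image_le_of_nonneg fun _ _ => Nat.zero_le _).trans ?_
      simpa only [rkS_restrict (hFY _)] using hsum
  · rintro ⟨𝒢, h𝒢⟩
    set e := 𝒢.equivFin
    have hGY (m : Fin 𝒢.card) : (e.symm m : Set α) ⊆ Y := h𝒢.subset _ (e.symm m).2
    have hrk (m : Fin 𝒢.card) :
        rkS (M.restrict Y) ((M.restrict Y).closure (e.symm m)) = rkS M (e.symm m) := by
      rw [rkS_closure, rkS_restrict (hGY m)]
    refine ⟨𝒢.card, fun m => (M.restrict Y).closure (e.symm m), fun m => ⟨Matroid.isFlat_closure _,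
      (hrk m).symm ▸ h𝒢.two_le_rkS _ (e.symm m).2⟩, fun y hy => ?_, ?_⟩
    · obtain ⟨G, hG, hyG⟩ := mem_iUnion₂.1 (h𝒢.subset_biUnion hy)
      refine mem_iUnion.2 ⟨e ⟨G, hG⟩, ?_⟩
      simpa using (M.restrict Y).subset_closure G (h𝒢.subset G hG) hyG
    · simp only [hrk]
      rw [e.symm.sum_comp (fun G : 𝒢 => rkS M G - 1), Finset.sum_coe_sort 𝒢 (rkS M · - 1)]
      exact h𝒢.sum_le

lemma degenSet_of_rkS_le (h : rkS M Y ≤ d) : DegenSet M Y d := by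
  refine degenSet_iff.2 (or_iff_not_imp_left.2 fun h1 => ⟨{Y}, ?_, ?_, ?_, ?_⟩) <;>
    simp <;> omega

lemma exists_subset_closure_of_card_mul_lt (hF : F ⊆ M.E) {𝒢 : Finset (Set α)} {m : ℕ}
    (hcov : F ⊆ ⋃ G ∈ 𝒢, G) (hsmall : ∀ W ⊆ F, DegenSet M W (rkS M F - 1) → W.ncard ≤ m)
    (hcard : 𝒢.card * m < F.ncard) : ∃ G ∈ 𝒢, F ⊆ M.closure G := by
  by_contra! hspan
  have hpiece (G : Set α) (hG : G ∈ 𝒢) : (G ∩ F).ncard ≤ m := by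
    refine hsmall _ inter_subset_right (degenSet_of_rkS_le ?_)
    by_contra! hlt
    exact hspan G hG ((subset_closure_of_rkS_le inter_subset_right hF (by omega)).trans
      (M.closure_subset_closure inter_subset_left))
  have hF : F = ⋃ G ∈ 𝒢, G ∩ F := by rw [← iUnion₂_inter, inter_eq_right.2 hcov]
  have : F.ncard ≤ 𝒢.card * m :=
    calc F.ncard = (⋃ G ∈ 𝒢, G ∩ F).ncard := congrArg ncard hF
      _ ≤ ∑ G ∈ 𝒢, (G ∩ F).ncard := 𝒢.set_ncard_biUnion_le _
      _ ≤ 𝒢.card * m := by simpa using Finset.sum_le_card_nsmul 𝒢 _ m hpiece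
  omega

end Degeneracy

section PrincipalTruncation

variable {M N : Matroid α} {F Y : Set α} {d : ℕ}

lemma IsPT.finite [M.Finite] (hN : IsPT M F N) : N.Finite :=
  ⟨hN.1 ▸ M.ground_finite⟩

lemma IsPT.rkS_of_subset_closure (hN : IsPT M F N) {Z : Set α} (hZ : Z ⊆ M.E)
    (h : F ⊆ M.closure Z) : rkS N Z = rkS M Z - 1 := by
  rw [hN.2 Z hZ, if_pos h]

lemma IsPT.rkS_of_not_subset_closure (hN : IsPT M F N) {Z : Set α} (hZ : Z ⊆ M.E)
    (h : ¬ F ⊆ M.closure Z) : rkS N Z = rkS M Z := by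
  rw [hN.2 Z hZ, if_neg h]

lemma IsPT.isDegenCover_of_forall_not_subset_closure (hN : IsPT M F N) (hY : Y ⊆ M.E)
    {𝒢 : Finset (Set α)} (h𝒢 : IsDegenCover N Y d 𝒢) (h : ∀ G ∈ 𝒢, ¬ F ⊆ M.closure G) :
    IsDegenCover M Y d 𝒢 := by
  have hrk (G : Set α) (hG : G ∈ 𝒢) : rkS N G = rkS M G :=
    hN.rkS_of_not_subset_closure ((h𝒢.subset G hG).trans hY) (h G hG)
  refine ⟨h𝒢.subset, fun G hG => hrk G hG ▸ h𝒢.two_le_rkS G hG, h𝒢.subset_biUnion, ?_⟩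
  rw [← Finset.sum_congr rfl fun G hG => congrArg (· - 1) (hrk G hG)]
  exact h𝒢.sum_le

variable [M.Finite]

lemma IsPT.degenSet_sub_one (hN : IsPT M F N) (hF : 3 ≤ rkS M F) (hY : Y ⊆ M.E)
    {𝒢 : Finset (Set α)} (h𝒢 : IsDegenCover M Y d 𝒢) {G₀ : Set α} (hG₀ : G₀ ∈ 𝒢)
    (hspan : F ⊆ M.closure G₀) : DegenSet N Y (d - 1) := by
  have := hN.finite
  have hGE (G : Set α) (hG : G ∈ 𝒢) : G ⊆ M.E := (h𝒢.subset G hG).trans hY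
  have hdrop (G : Set α) (hG : G ∈ 𝒢) : rkS N G - 1 ≤ rkS M G - 1 := by
    by_cases h : F ⊆ M.closure G
    · rw [hN.rkS_of_subset_closure (hGE G hG) h]; omega
    · rw [hN.rkS_of_not_subset_closure (hGE G hG) h]
  have hdrop₀ : rkS N G₀ - 1 < rkS M G₀ - 1 := by
    have := rkS_le_of_subset_closure hspan
    rw [hN.rkS_of_subset_closure (hGE G₀ hG₀) hspan]; omega
  refine degenSet_iff.2 (Or.inr ⟨𝒢, h𝒢.subset, fun G hG => ?_, h𝒢.subset_biUnion, ?_⟩)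
  · by_cases h : F ⊆ M.closure G
    · have := rkS_le_of_subset_closure h
      rw [hN.rkS_of_subset_closure (hGE G hG) h]; omega
    · rw [hN.rkS_of_not_subset_closure (hGE G hG) h]; exact h𝒢.two_le_rkS G hG
  · have hlt := Finset.sum_lt_sum hdrop ⟨G₀, hG₀, hdrop₀⟩
    have := h𝒢.sum_le
    omega

/-- The members spanning `F` are merged into one set `H`; by `rkS_biUnion_le` this costs
at most one in the sum. -/
lemma IsPT.isDegenCover_insert (hN : IsPT M F N) (hF : 2 ≤ rkS M F) (hY : Y ⊆ M.E)
    {𝒢 : Finset (Set α)} (h𝒢 : IsDegenCover N Y d 𝒢) {G₁ : Set α} (hG₁ : G₁ ∈ 𝒢)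
    (hspan : F ⊆ M.closure G₁) (hd : 1 ≤ d) :
    IsDegenCover M Y (d + 1) (insert (M.closure (⋃ G ∈ 𝒢.filter (F ⊆ M.closure ·), G) ∩ Y)
      (𝒢.filter (¬ F ⊆ M.closure ·))) := by
  set 𝒮 := 𝒢.filter (F ⊆ M.closure ·)
  set 𝒯 := 𝒢.filter (¬ F ⊆ M.closure ·)
  set H := M.closure (⋃ G ∈ 𝒮, G) ∩ Y
  have hGE (G : Set α) (hG : G ∈ 𝒢) : G ⊆ M.E := (h𝒢.subset G hG).trans hY
  have hGH (G : Set α) (hG : G ∈ 𝒮) : G ⊆ H :=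
    subset_inter ((subset_biUnion_of_mem (u := id) hG).trans
      (M.subset_closure _ (iUnion₂_subset fun G hG => hGE G (Finset.mem_of_mem_filter G hG))))
      (h𝒢.subset G (Finset.mem_of_mem_filter G hG))
  have hG₁𝒮 : G₁ ∈ 𝒮 := Finset.mem_filter.2 ⟨hG₁, hspan⟩
  have hrkM (G : Set α) (hG : G ∈ 𝒢) : 2 ≤ rkS M G := by
    by_cases h : F ⊆ M.closure G
    · exact hF.trans (rkS_le_of_subset_closure h)
    · exact hN.rkS_of_not_subset_closure (hGE G hG) h ▸ h𝒢.two_le_rkS G hG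
  have hH : rkS M H - 1 ≤ ∑ G ∈ 𝒮, (rkS N G - 1) + 1 := by
    have hsum : ∑ G ∈ 𝒮, (rkS M G - 2) = ∑ G ∈ 𝒮, (rkS N G - 1) :=
      Finset.sum_congr rfl fun G hG => by
        obtain ⟨hG, h⟩ := Finset.mem_filter.1 hG
        rw [hN.rkS_of_subset_closure (hGE G hG) h]; omega
    have : rkS M H ≤ ∑ G ∈ 𝒮, (rkS M G - 2) + 2 :=
      calc rkS M H ≤ rkS M (M.closure (⋃ G ∈ 𝒮, G)) := rkS_le_rkS inter_subset_left
        _ = rkS M (⋃ G ∈ 𝒮, G) := rkS_closure _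
        _ ≤ _ := rkS_biUnion_le 𝒮 hF fun G hG => (Finset.mem_filter.1 hG).2
    omega
  have h𝒯 : ∑ G ∈ 𝒯, (rkS M G - 1) = ∑ G ∈ 𝒯, (rkS N G - 1) :=
    Finset.sum_congr rfl fun G hG => by
      obtain ⟨hG, h⟩ := Finset.mem_filter.1 hG
      rw [hN.rkS_of_not_subset_closure (hGE G hG) h]
  have hHnot : H ∉ 𝒯 := fun hH =>
    (Finset.mem_filter.1 hH).2 (hspan.trans (M.closure_subset_closure (hGH G₁ hG₁𝒮)))
  refine ⟨?_, ?_, ?_, ?_⟩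
  · simp only [Finset.mem_insert]
    rintro G (rfl | hG)
    exacts [inter_subset_right, h𝒢.subset G (Finset.mem_of_mem_filter G hG)]
  · simp only [Finset.mem_insert]
    rintro G (rfl | hG)
    exacts [(hrkM G₁ hG₁).trans (rkS_le_rkS (hGH G₁ hG₁𝒮)),
      hrkM G (Finset.mem_of_mem_filter G hG)]
  · intro y hy
    obtain ⟨G, hG, hyG⟩ := mem_iUnion₂.1 (h𝒢.subset_biUnion hy)
    by_cases h : F ⊆ M.closure G
    · exact mem_biUnion (Finset.mem_insert_self _ _) (hGH G (Finset.mem_filter.2 ⟨hG, h⟩) hyG)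
    · exact mem_biUnion (Finset.mem_insert_of_mem (Finset.mem_filter.2 ⟨hG, h⟩)) hyG
  · rw [Finset.sum_insert hHnot, h𝒯]
    have hsplit : ∑ G ∈ 𝒮, (rkS N G - 1) + ∑ G ∈ 𝒯, (rkS N G - 1) = ∑ G ∈ 𝒢, (rkS N G - 1) :=
      Finset.sum_filter_add_sum_filter_not _ _ _
    have := h𝒢.sum_le
    omega

lemma IsPT.degenSet_add_one (hN : IsPT M F N) (hF : 2 ≤ rkS M F) (hY : Y ⊆ M.E)
    (hd : 1 ≤ d) (h : DegenSet N Y d) : DegenSet M Y (d + 1) := by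
  have := hN.finite
  obtain hY1 | ⟨𝒢, h𝒢⟩ := degenSet_iff.1 h
  · refine degenSet_of_rkS_le ?_
    have := hN.2 Y hY
    split_ifs at this <;> omega
  by_cases hspan : ∃ G ∈ 𝒢, F ⊆ M.closure G
  · obtain ⟨G₁, hG₁, hG₁span⟩ := hspan
    exact degenSet_iff.2 (Or.inr ⟨_, hN.isDegenCover_insert hF hY h𝒢 hG₁ hG₁span hd⟩)
  · refine degenSet_iff.2 (Or.inr ⟨𝒢, ?_⟩)
    exact (hN.isDegenCover_of_forall_not_subset_closure hY h𝒢
      fun G hG hG' => hspan ⟨G, hG, hG'⟩).mono (Nat.le_succ d)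

end PrincipalTruncation

theorem stmt18_general (k : ℕ) (M : Matroid α) [M.Finite] (X : ℕ → Set α)
    (hXtop : X (k + 1) = M.E)
    (hchain : ∀ i, 2 ≤ i → i ≤ k → X i ⊆ X (i + 1))
    (hdeg : ∀ i, 2 ≤ i → i ≤ k → DegenSet M (X i) i)
    (hopt : ∀ i, 2 ≤ i → i ≤ k → ∀ Y ⊆ X (i + 1), DegenSet M Y i →
      Y.ncard ≤ (X i).ncard)
    (i : ℕ) (hi3 : 3 ≤ i) (hrk : rkS M (X i) = i)
    (hsmall : k * (X (i - 1)).ncard < (X i).ncard)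
    (N : Matroid α) (hN : IsPT M (X i) N) :
    ∀ l, i ≤ l → l ≤ k →
      DegenSet N (X l) (l - 1) ∧
      ∀ Y ⊆ X (l + 1), DegenSet N Y (l - 1) → Y.ncard ≤ (X l).ncard := by
  intro l hil hlk
  have hmono : MonotoneOn X (Icc 2 (k + 1)) :=
    monotoneOn_of_le_succ ordConnected_Icc fun n _ hn _ => hchain n hn.1 (by
      simp only [Order.succ_eq_add_one, mem_Icc] at *; omega)
  have hXE (n : ℕ) (h2 : 2 ≤ n) (hn : n ≤ k + 1) : X n ⊆ M.E :=
    hXtop ▸ hmono ⟨h2, hn⟩ ⟨by omega, le_rfl⟩ hn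
  have hXil : X i ⊆ X l := hmono ⟨by omega, by omega⟩ ⟨by omega, by omega⟩ hil
  refine ⟨?_, fun Y hY hYdeg => hopt l (by omega) hlk Y hY ?_⟩
  · obtain hrk1 | ⟨𝒢, h𝒢⟩ := degenSet_iff.1 (hdeg l (by omega) hlk)
    · have := rkS_le_rkS (M := M) hXil; omega
    have hsmallX : ∀ W ⊆ X i, DegenSet M W (rkS M (X i) - 1) → W.ncard ≤ (X (i - 1)).ncard :=
      fun W hW hWdeg => hopt (i - 1) (by omega) (by omega) W
        (by rwa [Nat.sub_add_cancel (by omega)]) (by rwa [hrk] at hWdeg)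
    obtain ⟨G₀, hG₀, hspan⟩ := exists_subset_closure_of_card_mul_lt (hXE i (by omega) (by omega))
      (hXil.trans h𝒢.subset_biUnion) hsmallX
      ((Nat.mul_le_mul_right _ (h𝒢.card_le.trans (by omega))).trans_lt hsmall)
    exact hN.degenSet_sub_one (by omega) (hXE l (by omega) (by omega)) h𝒢 hG₀ hspan
  · have := hN.degenSet_add_one (by omega) (hY.trans (hXE (l + 1) (by omega) (by omega)))
      (by omega) hYdeg
    rwa [Nat.sub_add_cancel (by omega)] at this

/-- Principal truncation of the rank-`i` flat `Xᵢ` preserves an optimal partial stratification. -/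
theorem stmt18 (k : ℕ) (hk : 4 ≤ k) (M : Matroid α) [M.Finite] (hs : SimpleM M)
    (hr : rk M = k + 1) (X : ℕ → Set α)
    (hX1 : X 1 = ∅) (hXtop : X (k + 1) = M.E)
    (hchain : ∀ i, 2 ≤ i → i ≤ k → X i ⊆ X (i + 1))
    (hdeg : ∀ i, 2 ≤ i → i ≤ k → DegenSet M (X i) i)
    (hopt : ∀ i, 2 ≤ i → i ≤ k → ∀ Y ⊆ X (i + 1), DegenSet M Y i →
      Y.ncard ≤ (X i).ncard)
    (i : ℕ) (hi3 : 3 ≤ i) (hik : i ≤ k - 1)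
    (hflat : M.IsFlat (X i)) (hrk : rkS M (X i) = i)
    (hsmall : k * (X (i - 1)).ncard < (X i).ncard)
    (N : Matroid α) (hN : IsPT M (X i) N) :
    ∀ l, i ≤ l → l ≤ k →
      DegenSet N (X l) (l - 1) ∧
      ∀ Y ⊆ X (l + 1), DegenSet N Y (l - 1) → Y.ncard ≤ (X l).ncard :=
  stmt18_general k M X hXtop hchain hdeg hopt i hi3 hrk hsmall N hN

end MatroidPaper
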